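/- Let φ(p_1,…,p_n,q_1,…,q_k) be any Boolean formula (built from its argument places using only Boolean connectives). Then the inference rule with premise φ(N x_1,…,N x_n, (N y_1 S N z_1),…,(N y_k S N z_k)) and conclusion φ(x_1,…,x_n, (y_1 S z_1),…,(y_k S z_k)) is admissible in LTL_{Past,m}: for all formulas α_1,…,α_n, β_1,…,β_k, γ_1,…,γ_k, if φ(N α_1,…,N α_n, (N β_1 S N γ_1),…,(N β_k S N γ_k)) ∈ LTL_{Past,m} then φ(α_1,…,α_n, (β_1 S γ_1),…,(β_k S γ_k)) ∈ LTL_{Past,m}. -/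

import Mathlib

/-- Formulas of the language of `LTL_{Past,m}`: atoms, negation, conjunction,
`N` (next) and `S` (since). -/
inductive Formula : Type
  | atom : ℕ → Formula
  | neg : Formula → Formula
  | conj : Formula → Formula → Formula
  | next : Formula → Formula
  | since : Formula → Formula → Formula
deriving DecidableEq

namespace Formula

/-- Implication, defined as usual from `¬` and `∧`. -/
def imp (φ ψ : Formula) : Formula := .neg (.conj φ (.neg ψ))

/-- Disjunction, defined as usual from `¬` and `∧`. -/
def disj (φ ψ : Formula) : Formula := .neg (.conj (.neg φ) (.neg ψ))

/-- The constant true formula `⊤`, defined as usual. -/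
def top : Formula := imp (.atom 0) (.atom 0)

/-- `□φ` abbreviates `¬(⊤ S ¬φ)`. -/
def box (φ : Formula) : Formula := .neg (.since top (.neg φ))

end Formula

/-- Truth of a formula at a state `a : ℕ` in a model given by a valuation
`V : ℕ → Set ℕ`, in the bounded (measure of intransitivity `m`) semantics. -/
def Sat (m : ℕ) (V : ℕ → Set ℕ) : Formula → ℕ → Prop
  | .atom i, a => a ∈ V i
  | .neg φ, a => ¬ Sat m V φ a
  | .conj φ ψ, a => Sat m V φ a ∧ Sat m V ψ a
  | .next φ, a => Sat m V φ (a + 1)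
  | .since φ ψ, a =>
      ∃ b, a ≤ b ∧ b ≤ a + m ∧ Sat m V ψ b ∧ ∀ c, a ≤ c → c < b → Sat m V φ c

/-- A formula is valid in a model `V` if it is true at every state. -/
def ValidIn (m : ℕ) (V : ℕ → Set ℕ) (φ : Formula) : Prop := ∀ a : ℕ, Sat m V φ a

/-- The logic `LTL_{Past,m}`: the set of formulas valid in every model. -/
def Logic (m : ℕ) : Set Formula := { φ | ∀ V : ℕ → Set ℕ, ValidIn m V φ }

/-- Truth at a state in the unbounded (transitive) semantics of `LTL`. -/
def SatU (V : ℕ → Set ℕ) : Formula → ℕ → Prop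
  | .atom i, a => a ∈ V i
  | .neg φ, a => ¬ SatU V φ a
  | .conj φ ψ, a => SatU V φ a ∧ SatU V ψ a
  | .next φ, a => SatU V φ (a + 1)
  | .since φ ψ, a =>
      ∃ b, a ≤ b ∧ SatU V ψ b ∧ ∀ c, a ≤ c → c < b → SatU V φ c

/-- The transitive logic `LTL`: formulas true at every state of every model in
the unbounded semantics. -/
def LogicU : Set Formula := { φ | ∀ (V : ℕ → Set ℕ) (a : ℕ), SatU V φ a }

/-- Truth at a state in the non-uniformly non-transitive semantics, where the
reach of `S` at state `a` is bounded by `f a` for a bound function `f`. -/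
def SatB (f : ℕ → ℕ) (V : ℕ → Set ℕ) : Formula → ℕ → Prop
  | .atom i, a => a ∈ V i
  | .neg φ, a => ¬ SatB f V φ a
  | .conj φ ψ, a => SatB f V φ a ∧ SatB f V ψ a
  | .next φ, a => SatB f V φ (a + 1)
  | .since φ ψ, a =>
      ∃ b, a ≤ b ∧ b ≤ f a ∧ SatB f V ψ b ∧ ∀ c, a ≤ c → c < b → SatB f V φ c

/-- The non-uniformly non-transitive logic `LTL_{Past}`: formulas true at every
state of every model over every bound function. -/
def LogicPast : Set Formula :=
  { φ | ∀ f : ℕ → ℕ, (∀ i, i < f i) → (∀ i, f i < f (i + 1)) →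
      ∀ (V : ℕ → Set ℕ) (a : ℕ), SatB f V φ a }

/-- Substitutions map atoms to formulas and extend homomorphically. -/
def substF (σ : ℕ → Formula) : Formula → Formula
  | .atom i => σ i
  | .neg φ => .neg (substF σ φ)
  | .conj φ ψ => .conj (substF σ φ) (substF σ ψ)
  | .next φ => .next (substF σ φ)
  | .since φ ψ => .since (substF σ φ) (substF σ ψ)

/-- An inference rule: a finite list of premises and a conclusion. -/
structure Rule : Type where
  premises : List Formula
  conclusion : Formula
deriving DecidableEq

/-- A rule is valid in a model `V` if validity of all premises in `V` implies
validity of the conclusion in `V`. -/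
def RuleValid (m : ℕ) (V : ℕ → Set ℕ) (r : Rule) : Prop :=
  (∀ φ ∈ r.premises, ValidIn m V φ) → ValidIn m V r.conclusion

/-- A rule is admissible in `LTL_{Past,m}` if every substitution making all
premises theorems also makes the conclusion a theorem. -/
def Admissible (m : ℕ) (r : Rule) : Prop :=
  ∀ σ : ℕ → Formula,
    (∀ φ ∈ r.premises, substF σ φ ∈ Logic m) → substF σ r.conclusion ∈ Logic m

/-- Admissibility in the transitive logic `LTL`. -/
def AdmissibleU (r : Rule) : Prop :=
  ∀ σ : ℕ → Formula,
    (∀ φ ∈ r.premises, substF σ φ ∈ LogicU) → substF σ r.conclusion ∈ LogicU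

/-- The number of symbols in a formula. -/
def sizeF : Formula → ℕ
  | .atom _ => 1
  | .neg φ => sizeF φ + 1
  | .conj φ ψ => sizeF φ + sizeF ψ + 1
  | .next φ => sizeF φ + 1
  | .since φ ψ => sizeF φ + sizeF ψ + 1

/-- The number of symbols in a rule. -/
def ruleSize (r : Rule) : ℕ :=
  (r.premises.map sizeF).sum + sizeF r.conclusion

/-- An (injective) numerical encoding of formulas. -/
def encF : Formula → ℕ
  | .atom i => 5 * i
  | .neg φ => 5 * encF φ + 1
  | .conj φ ψ => 5 * Nat.pair (encF φ) (encF ψ) + 2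
  | .next φ => 5 * encF φ + 3
  | .since φ ψ => 5 * Nat.pair (encF φ) (encF ψ) + 4

/-- An (injective) numerical encoding of rules. -/
def encR (r : Rule) : ℕ :=
  Nat.pair (Encodable.encode (r.premises.map encF)) (encF r.conclusion)

/-- `lit true φ = φ` and `lit false φ = ¬φ`. -/
def lit (t : Bool) (φ : Formula) : Formula := if t then φ else .neg φ

/-- Conjunction of a list of formulas. -/
def bigConj : List Formula → Formula
  | [] => Formula.top
  | [φ] => φ
  | φ :: ψ :: rest => .conj φ (bigConj (ψ :: rest))

/-- Disjunction of a list of formulas. -/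
def bigDisj : List Formula → Formula
  | [] => .neg Formula.top
  | [φ] => φ
  | φ :: ψ :: rest => Formula.disj φ (bigDisj (ψ :: rest))

/-- A single disjunct of a reduced normal form over variables `x_1,…,x_n`
(the atoms `0,…,n-1`): for each `i` a literal over `x_i`, for each `i` a
literal over `N x_i`, and for each pair `i ≠ k` a literal over `x_i S x_k`. -/
def disjunct (n : ℕ) (t0 t1 : Fin n → Bool) (t2 : Fin n → Fin n → Bool) : Formula :=
  bigConj
    (((List.finRange n).map fun i => lit (t0 i) (.atom i)) ++
     ((List.finRange n).map fun i => lit (t1 i) (.next (.atom i))) ++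
     ((List.finRange n).flatMap fun i =>
        ((List.finRange n).filter fun k => k != i).map fun k =>
          lit (t2 i k) (.since (.atom i) (.atom k))))

/-- A rule is in reduced normal form if it has the shape `ε / x_1`, where `ε`
is a disjunction of disjuncts as above. -/
def IsRNF (r : Rule) : Prop :=
  ∃ n : ℕ, 0 < n ∧
    ∃ ds : List ((Fin n → Bool) × (Fin n → Bool) × (Fin n → Fin n → Bool)),
      ds ≠ [] ∧
      r.premises = [bigDisj (ds.map fun d => disjunct n d.1 d.2.1 d.2.2)] ∧
      r.conclusion = .atom 0

/-- Boolean formulas built from argument places `p_1,…,p_n, q_1,…,q_k` using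
only the Boolean connectives `¬` and `∧`. -/
inductive BForm (n k : ℕ) : Type
  | pvar : Fin n → BForm n k
  | qvar : Fin k → BForm n k
  | neg : BForm n k → BForm n k
  | conj : BForm n k → BForm n k → BForm n k

/-- Substitute formulas for the argument places of a Boolean formula. -/
def BForm.substB {n k : ℕ} (α : Fin n → Formula) (δ : Fin k → Formula) :
    BForm n k → Formula
  | .pvar i => α i
  | .qvar j => δ j
  | .neg φ => Formula.neg (BForm.substB α δ φ)
  | .conj φ ψ => Formula.conj (BForm.substB α δ φ) (BForm.substB α δ ψ)


/-!
The premise instance is the conclusion instance read one step later: `N` commutes with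
the Boolean connectives, and `N β S N γ` holds at `a` iff `β S γ` holds at `a + 1`.
So, given a model `V`, evaluate the premise in the model `V` shifted one step to the right;
at state `a` it says that the conclusion holds at `a + 1` of the shifted model, i.e. at `a` of `V`.
-/

lemma exists_since_window_succ (m a : ℕ) (P Q : ℕ → Prop) :
    (∃ b, a + 1 ≤ b ∧ b ≤ a + 1 + m ∧ Q b ∧ ∀ c, a + 1 ≤ c → c < b → P c) ↔
      ∃ b, a ≤ b ∧ b ≤ a + m ∧ Q (b + 1) ∧ ∀ c, a ≤ c → c < b → P (c + 1) := by
  constructor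
  · rintro ⟨b, hab, hbm, hQ, hP⟩
    obtain ⟨b, rfl⟩ : ∃ b', b = b' + 1 := ⟨b - 1, by omega⟩
    exact ⟨b, by omega, by omega, hQ, fun c hac hcb => hP (c + 1) (by omega) (by omega)⟩
  · rintro ⟨b, hab, hbm, hQ, hP⟩
    refine ⟨b + 1, by omega, by omega, hQ, fun c hac hcb => ?_⟩
    obtain ⟨c, rfl⟩ : ∃ c', c = c' + 1 := ⟨c - 1, by omega⟩
    exact hP c (by omega) (by omega)

def shiftVal (V : ℕ → Set ℕ) : ℕ → Set ℕ := fun i => (· + 1) '' V i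

lemma sat_shiftVal_succ (m : ℕ) (V : ℕ → Set ℕ) (ψ : Formula) (a : ℕ) :
    Sat m (shiftVal V) ψ (a + 1) ↔ Sat m V ψ a := by
  induction ψ generalizing a with
  | atom i => exact (add_left_injective 1).mem_set_image
  | neg φ ih => exact not_congr (ih a)
  | conj φ ψ ih₁ ih₂ => exact and_congr (ih₁ a) (ih₂ a)
  | next φ ih => exact ih (a + 1)
  | since φ ψ ih₁ ih₂ =>
    refine (exists_since_window_succ m a _ _).trans (exists_congr fun b => ?_)
    simp only [ih₁, ih₂]

lemma sat_since_next_next (m : ℕ) (V : ℕ → Set ℕ) (β γ : Formula) (a : ℕ) :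
    Sat m V (.since (.next β) (.next γ)) a ↔ Sat m V (.since β γ) (a + 1) :=
  (exists_since_window_succ m a _ _).symm

lemma sat_substB_next_iff_succ (m : ℕ) (V : ℕ → Set ℕ) {n k : ℕ}
    (α : Fin n → Formula) (β γ : Fin k → Formula) (φ : BForm n k) (a : ℕ) :
    Sat m V (BForm.substB (fun i => Formula.next (α i))
        (fun j => Formula.since (Formula.next (β j)) (Formula.next (γ j))) φ) a ↔
      Sat m V (BForm.substB α (fun j => Formula.since (β j) (γ j)) φ) (a + 1) := by
  induction φ generalizing a with
  | pvar i => exact Iff.rfl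
  | qvar j => exact sat_since_next_next m V (β j) (γ j) a
  | neg ψ ih => exact not_congr (ih a)
  | conj ψ χ ih₁ ih₂ => exact and_congr (ih₁ a) (ih₂ a)

theorem boolean_next_rule_admissible_general (m : ℕ) (n k : ℕ)
    (φ : BForm n k) (α : Fin n → Formula) (β γ : Fin k → Formula)
    (h : BForm.substB (fun i => Formula.next (α i))
          (fun j => Formula.since (Formula.next (β j)) (Formula.next (γ j))) φ
            ∈ Logic m) :
    BForm.substB α (fun j => Formula.since (β j) (γ j)) φ ∈ Logic m := fun V a =>
  (sat_shiftVal_succ m V _ a).mp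
    ((sat_substB_next_iff_succ m (shiftVal V) α β γ φ a).mp (h (shiftVal V) a))

/-- for any Boolean formula `φ(p_1,…,p_n,q_1,…,q_k)`, the rule
`φ(N x_1,…,N x_n, N y_1 S N z_1,…,N y_k S N z_k) / φ(x_1,…,x_n, y_1 S z_1,…,y_k S z_k)`
is admissible in `LTL_{Past,m}`. -/
theorem boolean_next_rule_admissible (m : ℕ) (hm : 1 ≤ m) (n k : ℕ)
    (φ : BForm n k) (α : Fin n → Formula) (β γ : Fin k → Formula)
    (h : BForm.substB (fun i => Formula.next (α i))
          (fun j => Formula.since (Formula.next (β j)) (Formula.next (γ j))) φ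
            ∈ Logic m) :
    BForm.substB α (fun j => Formula.since (β j) (γ j)) φ ∈ Logic m :=
  boolean_next_rule_admissible_general m n k φ α β γ h
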